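/- Let V, V' ⊆ {1,…,N} be nonempty with V ∩ V' = ∅, let a ∈ 𝔸_V, a' ∈ 𝔸_{V'}, and let c ∈ ℝ^N have strictly positive entries. Then N^eff(a+a',c) ≥ min{ N^eff(a,c), N^eff(a',c) }. -/

import Mathlib

open Finset

/-- Membership in `𝔸_V`: nonnegative `N × N` matrices supported on `V × V` whose
rows and columns indexed by `V` sum to one. -/
def memA {N : ℕ} (V : Finset (Fin N)) (a : Matrix (Fin N) (Fin N) ℝ) : Prop :=
  (∀ i j, 0 ≤ a i j) ∧
  (∀ i j, (i ∉ V ∨ j ∉ V) → a i j = 0) ∧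
  (∀ i ∈ V, ∑ j, a i j = 1) ∧
  (∀ j ∈ V, ∑ i, a i j = 1)

/-- The effective sample size `N^eff(a, c)`. -/
noncomputable def Neff {N : ℕ} (a : Matrix (Fin N) (Fin N) ℝ) (c : Fin N → ℝ) : ℝ :=
  (∑ i, ∑ j, a i j * c j) ^ 2 / (∑ i, (∑ j, a i j * c j) ^ 2)

open Matrix

/-!
Write `w = a *ᵥ c` and `w' = a' *ᵥ c`: these are nonnegative and, since `V ∩ V' = ∅`, have
disjoint supports. Hence `∑ (w + w')² = ∑ w² + ∑ w'²`, while `(∑ (w + w'))² ≥ (∑ w)² + (∑ w')²`,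
and the mediant inequality `min (x / u) (y / v) ≤ (x + y) / (u + v)` concludes.
-/

/-- The mediant inequality; it survives a vanishing denominator because `x / 0 = 0`. -/
lemma min_div_le_add_div_add {x y u v : ℝ} (hx : 0 ≤ x) (hy : 0 ≤ y) (hu : 0 ≤ u)
    (hv : 0 ≤ v) : min (x / u) (y / v) ≤ (x + y) / (u + v) := by
  rcases hu.eq_or_lt with rfl | hu
  · exact (min_le_left _ _).trans (by simp only [div_zero, zero_add]; positivity)
  rcases hv.eq_or_lt with rfl | hv
  · exact (min_le_right _ _).trans (by simp only [div_zero, add_zero]; positivity)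
  rw [le_div_iff₀ (by positivity), mul_add]
  gcongr
  · exact (mul_le_mul_of_nonneg_right (min_le_left _ _) hu.le).trans (div_mul_cancel₀ x hu.ne').le
  · exact (mul_le_mul_of_nonneg_right (min_le_right _ _) hv.le).trans (div_mul_cancel₀ y hv.ne').le

lemma min_sq_sum_div_sum_sq_le_of_mul_eq_zero {ι : Type*} [Fintype ι] {w w' : ι → ℝ}
    (hw : 0 ≤ w) (hw' : 0 ≤ w') (hww' : ∀ i, w i * w' i = 0) :
    min ((∑ i, w i) ^ 2 / ∑ i, w i ^ 2) ((∑ i, w' i) ^ 2 / ∑ i, w' i ^ 2) ≤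
      (∑ i, (w + w') i) ^ 2 / ∑ i, (w + w') i ^ 2 := by
  have hsq : ∑ i, (w + w') i ^ 2 = ∑ i, w i ^ 2 + ∑ i, w' i ^ 2 := by
    rw [← sum_add_distrib]
    refine sum_congr rfl fun i _ => ?_
    simp only [Pi.add_apply]
    linear_combination 2 * hww' i
  have hS : 0 ≤ ∑ i, w i := sum_nonneg fun i _ => hw i
  have hS' : 0 ≤ ∑ i, w' i := sum_nonneg fun i _ => hw' i
  have hsum : (∑ i, w i) ^ 2 + (∑ i, w' i) ^ 2 ≤ (∑ i, (w + w') i) ^ 2 := by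
    simp only [Pi.add_apply, sum_add_distrib]
    nlinarith [mul_nonneg hS hS']
  rw [hsq]
  refine (min_div_le_add_div_add (by positivity) (by positivity)
    (by positivity) (by positivity)).trans ?_
  gcongr

lemma Neff_eq_sum_mulVec {N : ℕ} (a : Matrix (Fin N) (Fin N) ℝ) (c : Fin N → ℝ) :
    Neff a c = (∑ i, (a *ᵥ c) i) ^ 2 / ∑ i, (a *ᵥ c) i ^ 2 :=
  rfl

namespace memA

variable {N : ℕ} {V : Finset (Fin N)} {a : Matrix (Fin N) (Fin N) ℝ} {c : Fin N → ℝ}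

lemma mulVec_nonneg (ha : memA V a) (hc : 0 ≤ c) : 0 ≤ a *ᵥ c :=
  fun i => dotProduct_nonneg_of_nonneg (ha.1 i) hc

lemma mulVec_eq_zero_of_notMem (ha : memA V a) {i : Fin N} (hi : i ∉ V) : (a *ᵥ c) i = 0 := by
  show ∑ j, a i j * c j = 0
  exact sum_eq_zero fun j _ => by rw [ha.2.1 i j (Or.inl hi), zero_mul]

end memA

theorem stmt_6_general {N : ℕ} (V V' : Finset (Fin N))
    (hdisj : Disjoint V V')
    (a a' : Matrix (Fin N) (Fin N) ℝ) (ha : memA V a) (ha' : memA V' a')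
    (c : Fin N → ℝ) (hc : ∀ j, 0 < c j) :
    min (Neff a c) (Neff a' c) ≤ Neff (a + a') c := by
  have hc₀ : 0 ≤ c := fun j => (hc j).le
  have hdisj_supp : ∀ i, (a *ᵥ c) i * (a' *ᵥ c) i = 0 := fun i => by
    by_cases hi : i ∈ V
    · rw [ha'.mulVec_eq_zero_of_notMem (disjoint_left.mp hdisj hi), mul_zero]
    · rw [ha.mulVec_eq_zero_of_notMem hi, zero_mul]
  simpa only [Neff_eq_sum_mulVec, Matrix.add_mulVec] using
    min_sq_sum_div_sum_sq_le_of_mul_eq_zero (ha.mulVec_nonneg hc₀) (ha'.mulVec_nonneg hc₀) hdisj_supp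

theorem stmt_6 {N : ℕ} (hN : 1 ≤ N) (V V' : Finset (Fin N))
    (hV : V.Nonempty) (hV' : V'.Nonempty) (hdisj : Disjoint V V')
    (a a' : Matrix (Fin N) (Fin N) ℝ) (ha : memA V a) (ha' : memA V' a')
    (c : Fin N → ℝ) (hc : ∀ j, 0 < c j) :
    min (Neff a c) (Neff a' c) ≤ Neff (a + a') c :=
  stmt_6_general V V' hdisj a a' ha ha' c hc
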